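/- arXiv:1512.09103 — 4 statements merged into one kernel-verified Lean document; each statement's English description precedes it below -/
import Mathlib

section
/- (Lemma 5.4) Fix n ≥ 1, weights L_1,…,L_n > 0, β ∈ [0,1], vectors z_k, x_{k+1} ∈ ℝ^n, a coordinate i, a real number g (the value ∇_i f(x_{k+1})), and constants η > 0, σ_β ≥ 0, p_i > 0. Let z' := (1/(1+ησ_β))·(z_k + ησ_β·x_{k+1} − (η/(p_i·L_i^β))·g·e_i). Then for every u ∈ ℝ^n: (η/p_i)·g·(z'_i − u_i) − (ησ_β/2)‖x_{k+1} − u‖²_{L_β} ≤ −(1/2)‖z_k − z'‖²_{L_β} + (1/2)‖z_k − u‖²_{L_β} − ((1+ησ_β)/2)‖z' − u‖²_{L_β}. -/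
/-- Weighted squared norm ‖v‖²_{L_β} := Σ_i L_i^β · v_i². -/
noncomputable def wnormSq {n : ℕ} (L : Fin n → ℝ) (β : ℝ) (v : Fin n → ℝ) : ℝ :=
  ∑ i, L i ^ β * v i ^ 2

/-- Lemma 5.4: the mirror-descent inequality for the z-update of NU_ACDM. -/
theorem stmt_3 (n : ℕ) (hn : 1 ≤ n) (L : Fin n → ℝ) (hL : ∀ j, 0 < L j)
    (β : ℝ) (hβ : β ∈ Set.Icc (0 : ℝ) 1)
    (zk xk1 : Fin n → ℝ) (i : Fin n) (g η σβ pI : ℝ)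
    (hη : 0 < η) (hσ : 0 ≤ σβ) (hpI : 0 < pI)
    (z' : Fin n → ℝ)
    (hz' : z' = (1 / (1 + η * σβ)) •
      (zk + (η * σβ) • xk1 - (η / (pI * L i ^ β) * g) • (Pi.single i 1 : Fin n → ℝ))) :
    ∀ u : Fin n → ℝ,
      η / pI * g * (z' i - u i) - η * σβ / 2 * wnormSq L β (xk1 - u)
        ≤ -(1 / 2) * wnormSq L β (zk - z') + (1 / 2) * wnormSq L β (zk - u)
          - (1 + η * σβ) / 2 * wnormSq L β (z' - u) := by
  intro u
  set s := η * σβ with hs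
  have hs0 : 0 ≤ s := by positivity
  have hc : (0:ℝ) < 1 + s := by linarith
  set a := η / (pI * L i ^ β) * g with ha
  have hwpos : ∀ j, (0:ℝ) < L j ^ β := fun j => Real.rpow_pos_of_pos (hL j) β
  have hkey : ∀ j, (1 + s) * z' j = zk j + s * xk1 j - a * (if j = i then 1 else 0) := by
    intro j
    rw [hz']
    simp only [Pi.smul_apply, Pi.sub_apply, Pi.add_apply, Pi.single_apply, smul_eq_mul]
    field_simp
  have hg : η / pI * g = a * L i ^ β := by
    have h1 : (L i ^ β) ≠ 0 := (hwpos i).ne'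
    have h2 : pI ≠ 0 := hpI.ne'
    rw [ha]
    field_simp
  have hsum : ∑ j, (L j ^ β * (a * (if j = i then 1 else 0)) * (z' j - u j))
      = a * L i ^ β * (z' i - u i) := by
    rw [Finset.sum_eq_single i]
    · rw [if_pos rfl]; ring
    · intro b _ hb; simp [hb]
    · simp
  have hx : 0 ≤ s / 2 * wnormSq L β (xk1 - z') := by
    apply mul_nonneg (by positivity)
    exact Finset.sum_nonneg fun j _ => mul_nonneg (hwpos j).le (sq_nonneg _)
  have hzero : ∑ j, (L j ^ β * (a * (if j = i then 1 else 0)) * (z' j - u j)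
      - s / 2 * (L j ^ β * (xk1 j - u j) ^ 2)
      + s / 2 * (L j ^ β * (xk1 j - z' j) ^ 2)
      + 1 / 2 * (L j ^ β * (zk j - z' j) ^ 2)
      - 1 / 2 * (L j ^ β * (zk j - u j) ^ 2)
      + (1 + s) / 2 * (L j ^ β * (z' j - u j) ^ 2)) = 0 := by
    apply Finset.sum_eq_zero
    intro j _
    have h := hkey j
    linear_combination (L j ^ β * (z' j - u j)) * h
  have hsplit : ∑ j, (L j ^ β * (a * (if j = i then 1 else 0)) * (z' j - u j)
      - s / 2 * (L j ^ β * (xk1 j - u j) ^ 2)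
      + s / 2 * (L j ^ β * (xk1 j - z' j) ^ 2)
      + 1 / 2 * (L j ^ β * (zk j - z' j) ^ 2)
      - 1 / 2 * (L j ^ β * (zk j - u j) ^ 2)
      + (1 + s) / 2 * (L j ^ β * (z' j - u j) ^ 2))
      = (∑ j, L j ^ β * (a * (if j = i then 1 else 0)) * (z' j - u j))
        - s / 2 * wnormSq L β (xk1 - u)
        + s / 2 * wnormSq L β (xk1 - z')
        + 1 / 2 * wnormSq L β (zk - z')
        - 1 / 2 * wnormSq L β (zk - u)
        + (1 + s) / 2 * wnormSq L β (z' - u) := by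
    unfold wnormSq
    simp only [Pi.sub_apply]
    rw [Finset.mul_sum, Finset.mul_sum, Finset.mul_sum, Finset.mul_sum, Finset.mul_sum]
    rw [← Finset.sum_sub_distrib, ← Finset.sum_add_distrib, ← Finset.sum_add_distrib,
      ← Finset.sum_sub_distrib, ← Finset.sum_add_distrib]
  rw [hsplit, hsum] at hzero
  rw [hg]
  linarith
end

section
/- (Lemma 5.5) Let f : ℝ^n → ℝ be differentiable and coordinate-wise smooth with parameters (L_1,…,L_n), each L_i > 0. Fix β ∈ [0,1], set α := (1−β)/2, S_α := Σ_{i=1}^n L_i^α, and p_i := L_i^α/S_α. Fix σ_β ≥ 0, η > 0, and vectors z_k, x_{k+1} ∈ ℝ^n. For each i define y^{(i)} := x_{k+1} − (1/L_i)·∇_i f(x_{k+1})·e_i and z^{(i)} := (1/(1+ησ_β))·(z_k + ησ_β·x_{k+1} − (η/(p_i·L_i^β))·∇_i f(x_{k+1})·e_i). Then for every u ∈ ℝ^n: η·⟨∇f(x_{k+1}), z_k − u⟩ − (ησ_β/2)‖u − x_{k+1}‖²_{L_β} ≤ η²·S_α²·( f(x_{k+1}) − Σ_{i=1}^n p_i·f(y^{(i)})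 ) + (1/2)‖z_k − u‖²_{L_β} − ((1+ησ_β)/2)·Σ_{i=1}^n p_i·‖z^{(i)} − u‖²_{L_β}. -/
/-!
Coordinate by coordinate the inequality splits into two facts. The gradient step to `y⁽ⁱ⁾`
decreases `f` by at least `∇ᵢf(x)² / (2Lᵢ)`, and since `(S_α pᵢ)² Lᵢ^β = Lᵢ` this pays
exactly for the quadratic term `pᵢ Lᵢ^β cᵢ² / 2` of the mirror step
`z⁽ⁱ⁾ = w - cᵢ / (1 + ησ) • eᵢ`, where `cᵢ = η ∇ᵢf(x) / (pᵢ Lᵢ^β)` and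
`w = (z_k + ησ x_{k+1}) / (1 + ησ)`. Averaging
`‖z⁽ⁱ⁾ - u‖²` over `i` moves only the `i`-th coordinate, and what is left in each coordinate
is a sum of squares.
-/

def basisVec {n : ℕ} (i : Fin n) : Fin n → ℝ := Pi.single i 1

noncomputable def coordGrad {n : ℕ} (f : (Fin n → ℝ) → ℝ) (x : Fin n → ℝ) (i : Fin n) : ℝ :=
  fderiv ℝ f x (basisVec i)

def CoordSmooth {n : ℕ} (f : (Fin n → ℝ) → ℝ) (L : Fin n → ℝ) : Prop :=
  ∀ (x : Fin n → ℝ) (δ : ℝ) (i : Fin n),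
    |coordGrad f (x + δ • basisVec i) i - coordGrad f x i| ≤ L i * |δ|

theorem le_add_mul_add_sq_of_lipschitz_deriv {g g' : ℝ → ℝ} {K : ℝ}
    (hg : ∀ t, HasDerivAt g (g' t) t) (hg' : ∀ s t, |g' s - g' t| ≤ K * |s - t|) (δ : ℝ) :
    g δ ≤ g 0 + δ * g' 0 + K * δ ^ 2 / 2 := by
  -- the slope of `φ` is `δ (g'(tδ) - g'(0)) - Kδ²t ≤ 0` for `t > 0`
  set φ : ℝ → ℝ := fun t => g (t * δ) - t * δ * g' 0 - K * δ ^ 2 * t ^ 2 / 2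
  have hφ : ∀ t, HasDerivAt φ (δ * g' (t * δ) - δ * g' 0 - K * δ ^ 2 * t) t := by
    intro t
    have h := (((hg (t * δ)).comp t ((hasDerivAt_id t).mul_const δ)).sub
      (((hasDerivAt_id t).mul_const δ).mul_const (g' 0))).sub
      (((hasDerivAt_pow 2 t).const_mul (K * δ ^ 2)).div_const 2)
    exact h.congr_deriv (by norm_num; ring)
  obtain ⟨t, ⟨ht0, -⟩, hslope⟩ := exists_hasDerivAt_eq_slope φ _ zero_lt_one
    (fun t _ => (hφ t).continuousAt.continuousWithinAt) (fun t _ => hφ t)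
  have hle : δ * (g' (t * δ) - g' 0) ≤ K * δ ^ 2 * t := by
    calc δ * (g' (t * δ) - g' 0) ≤ |δ| * |g' (t * δ) - g' 0| := by
          rw [← abs_mul]; exact le_abs_self _
      _ ≤ |δ| * (K * |t * δ - 0|) := by gcongr; exact hg' _ _
      _ = K * δ ^ 2 * t := by
          rw [sub_zero, abs_mul, abs_of_pos ht0, ← sq_abs δ]; ring
  have hφ10 : φ 1 - φ 0 ≤ 0 := by
    rw [sub_zero, div_one] at hslope
    linarith
  norm_num [φ] at hφ10
  linarith

theorem hasDerivAt_comp_add_smul_basisVec {n : ℕ} {f : (Fin n → ℝ) → ℝ}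
    (hf : Differentiable ℝ f) (x : Fin n → ℝ) (i : Fin n) (t : ℝ) :
    HasDerivAt (fun s : ℝ => f (x + s • basisVec i)) (coordGrad f (x + t • basisVec i) i) t := by
  have hline : HasDerivAt (fun s : ℝ => x + s • basisVec i) (basisVec i) t := by
    simpa using ((hasDerivAt_id t).smul_const (basisVec i)).const_add x
  exact (hf _).hasFDerivAt.comp_hasDerivAt t hline

namespace CoordSmooth

variable {n : ℕ} {f : (Fin n → ℝ) → ℝ} {L : Fin n → ℝ}

theorem le_add_smul_basisVec (hsmooth : CoordSmooth f L) (hf : Differentiable ℝ f)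
    (x : Fin n → ℝ) (i : Fin n) (δ : ℝ) :
    f (x + δ • basisVec i) ≤ f x + δ * coordGrad f x i + L i * δ ^ 2 / 2 := by
  have h := le_add_mul_add_sq_of_lipschitz_deriv (hasDerivAt_comp_add_smul_basisVec hf x i)
    (fun s t => by
      simpa [add_assoc, ← add_smul] using hsmooth (x + t • basisVec i) (s - t) i) δ
  simpa using h

theorem le_sub_sq_coordGrad_div (hsmooth : CoordSmooth f L) (hf : Differentiable ℝ f)
    (x : Fin n → ℝ) (i : Fin n) (hL : L i ≠ 0) :
    f (x - (1 / L i * coordGrad f x i) • basisVec i)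
      ≤ f x - coordGrad f x i ^ 2 / (2 * L i) := by
  have h := hsmooth.le_add_smul_basisVec hf x i (-(1 / L i * coordGrad f x i))
  rw [neg_smul, ← sub_eq_add_neg] at h
  refine h.trans (le_of_eq ?_)
  field_simp
  ring

end CoordSmooth

section WeightedNorm

variable {n : ℕ} (L : Fin n → ℝ) (β : ℝ)

theorem wnormSq_sub_smul_basisVec (w : Fin n → ℝ) (i : Fin n) (t : ℝ) :
    wnormSq L β (w - t • basisVec i)
      = wnormSq L β w + L i ^ β * ((w i - t) ^ 2 - w i ^ 2) := by
  have hcoord : ∀ j, L j ^ β * (w - t • basisVec i) j ^ 2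
      = L j ^ β * w j ^ 2 + if j = i then L i ^ β * ((w i - t) ^ 2 - w i ^ 2) else 0 := by
    intro j
    by_cases hj : j = i
    · subst hj
      simp only [basisVec, Pi.sub_apply, Pi.smul_apply, Pi.single_eq_same, smul_eq_mul, mul_one,
        if_true]
      ring
    · simp [basisVec, hj]
  simp only [wnormSq, hcoord, Finset.sum_add_distrib, Finset.sum_ite_eq', Finset.mem_univ,
    if_true]

theorem sum_mul_wnormSq_sub_smul_basisVec {p : Fin n → ℝ} (hp : ∑ i, p i = 1)
    (w t : Fin n → ℝ) :
    ∑ i, p i * wnormSq L β (w - t i • basisVec i)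
      = wnormSq L β w + ∑ i, p i * (L i ^ β * ((w i - t i) ^ 2 - w i ^ 2)) := by
  simp only [wnormSq_sub_smul_basisVec, mul_add, Finset.sum_add_distrib, ← Finset.sum_mul, hp,
    one_mul]

end WeightedNorm

section SamplingWeights

variable {n : ℕ} {L p : Fin n → ℝ} {α S : ℝ}

theorem sum_rpow_pos [Nonempty (Fin n)] (hL : ∀ i, 0 < L i) (α : ℝ) : 0 < ∑ i, L i ^ α :=
  Finset.sum_pos (fun j _ => Real.rpow_pos_of_pos (hL j) α) Finset.univ_nonempty

theorem pos_of_eq_rpow_div_sum (hL : ∀ i, 0 < L i) (hS : S = ∑ i, L i ^ α)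
    (hp : ∀ i, p i = L i ^ α / S) (i : Fin n) : 0 < p i := by
  have : Nonempty (Fin n) := ⟨i⟩
  have hSpos : 0 < S := hS ▸ sum_rpow_pos hL α
  exact hp i ▸ div_pos (Real.rpow_pos_of_pos (hL i) α) hSpos

theorem sum_eq_one_of_eq_rpow_div_sum [Nonempty (Fin n)] (hL : ∀ i, 0 < L i)
    (hS : S = ∑ i, L i ^ α) (hp : ∀ i, p i = L i ^ α / S) : ∑ i, p i = 1 := by
  simp only [hp, ← Finset.sum_div, ← hS, div_self (hS ▸ sum_rpow_pos hL α).ne']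

theorem sq_mul_rpow_eq_of_eq_rpow_div_sum {β : ℝ} (hL : ∀ i, 0 < L i) (hα : α = (1 - β) / 2)
    (hS : S = ∑ i, L i ^ α) (hp : ∀ i, p i = L i ^ α / S) (i : Fin n) :
    (S * p i) ^ 2 * L i ^ β = L i := by
  have : Nonempty (Fin n) := ⟨i⟩
  have hSpos : 0 < S := hS ▸ sum_rpow_pos hL α
  rw [hp i, mul_div_cancel₀ _ hSpos.ne', ← Real.rpow_natCast, ← Real.rpow_mul (hL i).le,
    ← Real.rpow_add (hL i), hα]
  norm_num

end SamplingWeights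

theorem CoordSmooth.mul_sq_le_mul_descent {n : ℕ} {f : (Fin n → ℝ) → ℝ} {L : Fin n → ℝ}
    (hsmooth : CoordSmooth f L) (hf : Differentiable ℝ f) (x : Fin n → ℝ) (i : Fin n)
    (hLi : 0 < L i) {q ℓ S η : ℝ} (hq : 0 < q) (hℓ : 0 < ℓ) (hL : (S * q) ^ 2 * ℓ = L i) :
    q * ℓ * (η / (q * ℓ) * coordGrad f x i) ^ 2 / 2
      ≤ η ^ 2 * S ^ 2 * (q * (f x - f (x - (1 / L i * coordGrad f x i) • basisVec i))) := by
  have hS : S ≠ 0 := fun h => hLi.ne' (by rw [← hL, h]; ring)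
  have hdesc := hsmooth.le_sub_sq_coordGrad_div hf x i hLi.ne'
  calc q * ℓ * (η / (q * ℓ) * coordGrad f x i) ^ 2 / 2
      = η ^ 2 * S ^ 2 * (q * (coordGrad f x i ^ 2 / (2 * L i))) := by
        rw [← hL]; field_simp
    _ ≤ _ := by gcongr; linarith

theorem linearCoupling_coord_le {ℓ q τ c z x u m F : ℝ} (hℓ : 0 ≤ ℓ) (hq0 : 0 ≤ q)
    (hq1 : q ≤ 1) (hτ : 0 ≤ τ) (hm : m = (1 + τ)⁻¹ * (z + τ * x) - u) (hF : q * ℓ * c ^ 2 / 2 ≤ F) :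
    q * ℓ * c * (z - u) - τ / 2 * (ℓ * (u - x) ^ 2)
      ≤ F + 1 / 2 * (ℓ * (z - u) ^ 2)
        - (1 + τ) / 2 * (ℓ * m ^ 2 + q * (ℓ * ((m - c / (1 + τ)) ^ 2 - m ^ 2))) := by
  have hτ1 : 0 < 1 + τ := by linarith
  have hsos : F + 1 / 2 * (ℓ * (z - u) ^ 2)
        - (1 + τ) / 2 * (ℓ * m ^ 2 + q * (ℓ * ((m - c / (1 + τ)) ^ 2 - m ^ 2)))
        - (q * ℓ * c * (z - u) - τ / 2 * (ℓ * (u - x) ^ 2))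
      = (F - q * ℓ * c ^ 2 / 2)
        + τ * ℓ / (2 * (1 + τ)) * ((z - x - q * c) ^ 2 + q * (1 - q) * c ^ 2) := by
    subst hm; field_simp; ring
  have : 0 ≤ τ * ℓ / (2 * (1 + τ)) * ((z - x - q * c) ^ 2 + q * (1 - q) * c ^ 2) := by
    have : 0 ≤ 1 - q := by linarith
    positivity
  linarith

theorem stmt_4_general (n : ℕ) (f : (Fin n → ℝ) → ℝ) (L : Fin n → ℝ)
    (hf : Differentiable ℝ f) (hL : ∀ i, 0 < L i)
    (hsmooth : CoordSmooth f L)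
    (β : ℝ)
    (α Sα : ℝ) (hα : α = (1 - β) / 2) (hS : Sα = ∑ i, L i ^ α)
    (p : Fin n → ℝ) (hp : ∀ i, p i = L i ^ α / Sα)
    (σβ η : ℝ) (hσ : 0 ≤ σβ) (hη : 0 < η)
    (zk xk1 : Fin n → ℝ)
    (Y Z : Fin n → Fin n → ℝ)
    (hY : ∀ i, Y i = xk1 - (1 / L i * coordGrad f xk1 i) • basisVec i)
    (hZ : ∀ i, Z i = (1 / (1 + η * σβ)) •
      (zk + (η * σβ) • xk1 - (η / (p i * L i ^ β) * coordGrad f xk1 i) • basisVec i))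
    (u : Fin n → ℝ) :
    η * (∑ i, coordGrad f xk1 i * (zk i - u i)) - η * σβ / 2 * wnormSq L β (u - xk1)
      ≤ η ^ 2 * Sα ^ 2 * (f xk1 - ∑ i, p i * f (Y i))
        + (1 / 2) * wnormSq L β (zk - u)
        - (1 + η * σβ) / 2 * ∑ i, p i * wnormSq L β (Z i - u) := by
  rcases isEmpty_or_nonempty (Fin n) with hn | hn
  · simp [wnormSq, hS]
  set τ := η * σβ
  have hτ : 0 ≤ τ := mul_nonneg hη.le hσ
  have hp0 := pos_of_eq_rpow_div_sum hL hS hp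
  have hpsum := sum_eq_one_of_eq_rpow_div_sum hL hS hp
  have hℓ : ∀ i, 0 < L i ^ β := fun i => Real.rpow_pos_of_pos (hL i) β
  set w := (1 + τ)⁻¹ • (zk + τ • xk1)
  set c : Fin n → ℝ := fun i => η / (p i * L i ^ β) * coordGrad f xk1 i
  have hZu : ∀ i, Z i - u = (w - u) - (c i / (1 + τ)) • basisVec i := by
    intro i; rw [hZ i]; simp only [c, w]; module
  have hgrad : ∀ i, η * coordGrad f xk1 i = p i * L i ^ β * c i := fun i => by
    have := (hp0 i).ne'; have := (hℓ i).ne'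
    simp only [c]; field_simp
  have hexpect : f xk1 - ∑ i, p i * f (Y i) = ∑ i, p i * (f xk1 - f (Y i)) := by
    simp only [mul_sub, Finset.sum_sub_distrib, ← Finset.sum_mul, hpsum, one_mul]
  simp only [hZu]
  rw [sum_mul_wnormSq_sub_smul_basisVec L β hpsum (w - u) fun i => c i / (1 + τ), hexpect]
  simp only [wnormSq, Finset.mul_sum, ← Finset.sum_add_distrib, ← Finset.sum_sub_distrib]
  refine Finset.sum_le_sum fun i _ => ?_
  have hprogress := hsmooth.mul_sq_le_mul_descent hf xk1 i (hL i) (hp0 i) (hℓ i)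
    (sq_mul_rpow_eq_of_eq_rpow_div_sum hL hα hS hp i) (η := η)
  rw [← hY i] at hprogress
  have hp1 : p i ≤ 1 :=
    hpsum ▸ Finset.single_le_sum (fun j _ => (hp0 j).le) (Finset.mem_univ i)
  have hcoord := linearCoupling_coord_le (hℓ i).le (hp0 i).le hp1 hτ
    (m := (w - u) i) (z := zk i) (x := xk1 i) (u := u i) (by simp [w, mul_add]) hprogress
  rw [← mul_assoc, hgrad i]
  simpa only [Pi.sub_apply] using hcoord

/-- Lemma 5.5: combining the gradient-descent and mirror-descent guarantees of NU_ACDM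
in expectation over the randomly sampled coordinate. -/
theorem stmt_4 (n : ℕ) (f : (Fin n → ℝ) → ℝ) (L : Fin n → ℝ)
    (hf : Differentiable ℝ f) (hL : ∀ i, 0 < L i)
    (hsmooth : CoordSmooth f L)
    (β : ℝ) (hβ : β ∈ Set.Icc (0 : ℝ) 1)
    (α Sα : ℝ) (hα : α = (1 - β) / 2) (hS : Sα = ∑ i, L i ^ α)
    (p : Fin n → ℝ) (hp : ∀ i, p i = L i ^ α / Sα)
    (σβ η : ℝ) (hσ : 0 ≤ σβ) (hη : 0 < η)
    (zk xk1 : Fin n → ℝ)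
    (Y Z : Fin n → Fin n → ℝ)
    (hY : ∀ i, Y i = xk1 - (1 / L i * coordGrad f xk1 i) • basisVec i)
    (hZ : ∀ i, Z i = (1 / (1 + η * σβ)) •
      (zk + (η * σβ) • xk1 - (η / (p i * L i ^ β) * coordGrad f xk1 i) • basisVec i))
    (u : Fin n → ℝ) :
    η * (∑ i, coordGrad f xk1 i * (zk i - u i)) - η * σβ / 2 * wnormSq L β (u - xk1)
      ≤ η ^ 2 * Sα ^ 2 * (f xk1 - ∑ i, p i * f (Y i))
        + (1 / 2) * wnormSq L β (zk - u)
        - (1 + η * σβ) / 2 * ∑ i, p i * wnormSq L β (Z i - u) :=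
  stmt_4_general n f L hf hL hsmooth β α Sα hα hS p hp σβ η hσ hη zk xk1 Y Z hY hZ u
end

section
/- (Lemma 5.6) Let f : ℝ^n → ℝ be differentiable, convex, coordinate-wise smooth with parameters (L_1,…,L_n) (each L_i > 0), and σ_β-strongly convex with respect to ‖·‖_{L_β} for some β ∈ [0,1] and σ_β > 0. Let x* be a minimizer of f. Set α := (1−β)/2, S_α := Σ_i L_i^α, p_i := L_i^α/S_α. Fix τ ∈ (0,1], set η := 1/(τ·S_α²), fix y_k, z_k ∈ ℝ^n and let x_{k+1} := τ·z_k + (1−τ)·y_k. For each i define y^{(i)} := x_{k+1} − (1/L_i)·∇_i f(x_{k+1})·e_i and z^{(i)} := (1/(1+ησ_β))·(z_k + ησ_β·x_{k+1} − (η/(p_i·L_i^β))·∇_i f(x_{k+1})·e_i). Then: 0 ≤ ((1−τ)η/τ)·(f(y_k) − f(x*)) − (η/τ)·Σ_{i=1}^n p_i·(f(y^{(i)}) − f(x*)) + (1/2)‖z_k − x*‖²_{L_β} − ((1+ησ_β)/2)·Σ_{i=1}^n p_i·‖z^{(i)} − x*‖²_{L_β}. -/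
/-- f is σ-strongly convex with respect to the weighted norm ‖·‖_{L_β}:
`f(y) ≥ f(x) + ⟨∇f(x), y − x⟩ + (σ/2)‖y − x‖²_{L_β}` for all x, y. -/
def StronglyConvexW {n : ℕ} (f : (Fin n → ℝ) → ℝ) (L : Fin n → ℝ) (β σ : ℝ) : Prop :=
  ∀ x y : Fin n → ℝ,
    f x + (∑ i, coordGrad f x i * (y i - x i)) + σ / 2 * wnormSq L β (y - x) ≤ f y

/-!
Write `x = x_{k+1}`, `g = ∇f(x)`, `s = ησ_β` and `c_i = η g_i / (p_i L_i^β)`. For each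
coordinate `i`, coordinate-wise smoothness gives the descent `f(y⁽ⁱ⁾) ≤ f(x) - g_i² / (2 L_i)`,
and `z⁽ⁱ⁾` solves `(1 + s) (z⁽ⁱ⁾ - x*) = (z_k - x*) + s (x - x*) - c_i e_i`, which gives a
three-point inequality with error term `L_i^β c_i² / 2`. Because `α = (1 - β)/2` and
`η = 1 / (τ S_α²)` make `p_i² L_i^β = τ η L_i`, the weighted error `p_i L_i^β c_i² / 2` equals
`η/τ · p_i · g_i² / (2 L_i)`, which the descent pays for. Averaging over `i` leaves the linear
term `η ⟨g, z_k - x*⟩`. Since `τ z_k = x - (1 - τ) y_k`, it splits as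
`η (1 - τ)/τ ⟨g, x - y_k⟩ + η ⟨g, x - x*⟩`, and strong convexity bounds `⟨g, x - y_k⟩` and
`⟨g, x - x*⟩` below by `f(x) - f(y_k)` and `f(x) - f(x*) + σ_β/2 ‖x - x*‖²`; the `f(x)` terms
then cancel.
-/

open Real

lemma le_add_mul_add_sq_of_hasDerivAt {g g' : ℝ → ℝ} {L : ℝ} (hg : ∀ t, HasDerivAt g (g' t) t)
    (hLip : ∀ t, |g' t - g' 0| ≤ L * |t|) (δ : ℝ) :
    g δ ≤ g 0 + g' 0 * δ + L / 2 * δ ^ 2 := by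
  -- rescaling `[0, δ]` to `[0, 1]` handles both signs of `δ` with one monotonicity argument
  set φ : ℝ → ℝ := fun u => g (u * δ) - g' 0 * (u * δ) - L / 2 * (u * δ) ^ 2
  have hφ : ∀ u, HasDerivAt φ ((g' (u * δ) - g' 0 - L * (u * δ)) * δ) u := by
    intro u
    have hlin : HasDerivAt (fun u : ℝ => u * δ) δ u := by
      simpa using (hasDerivAt_id u).mul_const δ
    exact ((((hg (u * δ)).comp u hlin).sub (hlin.const_mul (g' 0))).sub
      ((hlin.pow 2).const_mul (L / 2))).congr_deriv (by push_cast; ring)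
  have hφ_nonpos : ∀ u, 0 ≤ u → (g' (u * δ) - g' 0 - L * (u * δ)) * δ ≤ 0 := by
    intro u hu
    have : (g' (u * δ) - g' 0) * δ ≤ L * (u * δ) * δ :=
      calc (g' (u * δ) - g' 0) * δ ≤ |g' (u * δ) - g' 0| * |δ| := by
            rw [← abs_mul]; exact le_abs_self _
        _ ≤ L * |u * δ| * |δ| := mul_le_mul_of_nonneg_right (hLip _) (abs_nonneg δ)
        _ = L * (u * δ) * δ := by
            rw [abs_mul, abs_of_nonneg hu, mul_assoc, mul_assoc, abs_mul_abs_self]; ring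
    linarith
  have hanti : AntitoneOn φ (Set.Ici 0) :=
    antitoneOn_of_hasDerivWithinAt_nonpos (convex_Ici 0)
      (fun u _ => (hφ u).continuousAt.continuousWithinAt)
      (fun u _ => (hφ u).hasDerivWithinAt)
      (fun u hu => hφ_nonpos u (by rw [interior_Ici] at hu; exact le_of_lt hu))
  have := hanti Set.self_mem_Ici (Set.mem_Ici.mpr zero_le_one) zero_le_one
  simp only [φ, one_mul, zero_mul, mul_zero] at this
  linarith

section

variable {n : ℕ} {f : (Fin n → ℝ) → ℝ} {L : Fin n → ℝ}

lemma CoordSmooth.le_add_coordGrad_mul (hsmooth : CoordSmooth f L) (hf : Differentiable ℝ f)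
    (x : Fin n → ℝ) (i : Fin n) (δ : ℝ) :
    f (x + δ • basisVec i) ≤ f x + coordGrad f x i * δ + L i / 2 * δ ^ 2 := by
  have hline : ∀ t : ℝ, HasDerivAt (fun t : ℝ => f (x + t • basisVec i))
      (coordGrad f (x + t • basisVec i) i) t := fun t =>
    (hf _).hasFDerivAt.comp_hasDerivAt t
      ((((hasDerivAt_id t).smul_const (basisVec i)).const_add x).congr_deriv (one_smul ℝ _))
  simpa using le_add_mul_add_sq_of_hasDerivAt hline (fun t => by simpa using hsmooth x t i) δ

lemma CoordSmooth.le_sub_coordGrad_sq (hsmooth : CoordSmooth f L) (hf : Differentiable ℝ f)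
    (x : Fin n → ℝ) {i : Fin n} (hLi : 0 < L i) :
    f (x - (1 / L i * coordGrad f x i) • basisVec i) ≤ f x - coordGrad f x i ^ 2 / (2 * L i) := by
  have h := hsmooth.le_add_coordGrad_mul hf x i (-(1 / L i * coordGrad f x i))
  rw [neg_smul, ← sub_eq_add_neg] at h
  convert h using 1
  field_simp
  ring

end

lemma sq_add_le_of_mul_eq {s a b d w : ℝ} (hs : 0 ≤ s) (hw : (1 + s) * w = a + s * b - d) :
    d * a + (1 + s) / 2 * w ^ 2 ≤ d ^ 2 / 2 + a ^ 2 / 2 + s / 2 * b ^ 2 := by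
  have h2s : (0 : ℝ) < 2 * (1 + s) := by positivity
  refine le_of_sub_nonneg ((mul_nonneg_iff_of_pos_left h2s).mp ?_)
  linear_combination mul_nonneg hs (sq_nonneg (a - b - d)) + ((1 + s) * w + (a + s * b - d)) * hw

section

variable {n : ℕ} (L : Fin n → ℝ) (β : ℝ)

lemma wnormSq_nonneg (hL : ∀ j, 0 ≤ L j) (v : Fin n → ℝ) : 0 ≤ wnormSq L β v :=
  Finset.sum_nonneg fun j _ => mul_nonneg (rpow_nonneg (hL j) β) (sq_nonneg _)

lemma wnormSq_sub_comm (v w : Fin n → ℝ) : wnormSq L β (v - w) = wnormSq L β (w - v) := by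
  simp only [wnormSq, Pi.sub_apply, sq, ← neg_sub (w _), neg_mul_neg]

lemma wnormSq_smul_basisVec (c : ℝ) (i : Fin n) :
    wnormSq L β (c • basisVec i) = L i ^ β * c ^ 2 := by
  simp [wnormSq, basisVec, Pi.single_apply]

lemma wnormSq_le_of_smul_eq (hL : ∀ j, 0 ≤ L j) {s : ℝ} (hs : 0 ≤ s) {a b d w : Fin n → ℝ}
    (hw : (1 + s) • w = a + s • b - d) :
    ∑ j, L j ^ β * d j * a j + (1 + s) / 2 * wnormSq L β w
      ≤ wnormSq L β d / 2 + wnormSq L β a / 2 + s / 2 * wnormSq L β b := by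
  simp only [wnormSq, Finset.mul_sum, Finset.sum_div, ← Finset.sum_add_distrib]
  refine Finset.sum_le_sum fun j _ => ?_
  have hwj : (1 + s) * w j = a j + s * b j - d j := by simpa using congrFun hw j
  linear_combination mul_le_mul_of_nonneg_left (sq_add_le_of_mul_eq hs hwj) (rpow_nonneg (hL j) β)

end

section

variable {n : ℕ} {f : (Fin n → ℝ) → ℝ} {L : Fin n → ℝ} {β : ℝ}

lemma CoordSmooth.coord_step_le (hsmooth : CoordSmooth f L) (hf : Differentiable ℝ f)
    (hL : ∀ j, 0 < L j) {s η τ q : ℝ} (hs : 0 ≤ s) (hη : 0 ≤ η) (hτ : 0 < τ) (hq : 0 < q)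
    {i : Fin n} (hqL : q ^ 2 * L i ^ β = τ * η * L i) {x z u w : Fin n → ℝ}
    (hw : (1 + s) • (w - u) = (z - u) + s • (x - u)
      - (η / (q * L i ^ β) * coordGrad f x i) • basisVec i) :
    η * (coordGrad f x i * (z i - u i)) + (1 + s) / 2 * (q * wnormSq L β (w - u))
      ≤ η / τ * (q * (f x - f (x - (1 / L i * coordGrad f x i) • basisVec i)))
        + q * (wnormSq L β (z - u) / 2 + s / 2 * wnormSq L β (x - u)) := by
  set g := coordGrad f x i
  obtain ⟨c, hc⟩ : ∃ c, c = η / (q * L i ^ β) * g := ⟨_, rfl⟩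
  rw [← hc] at hw
  have hmirror := wnormSq_le_of_smul_eq L β (fun j => (hL j).le) hs hw
  rw [wnormSq_smul_basisVec] at hmirror
  simp only [Pi.smul_apply, Pi.sub_apply, basisVec, Pi.single_apply, smul_eq_mul, mul_ite,
    mul_one, mul_zero, ite_mul, zero_mul, Finset.sum_ite_eq', Finset.mem_univ, if_true] at hmirror
  have hdescent := hsmooth.le_sub_coordGrad_sq hf x (hL i)
  have hLi := hL i
  have hLβ := rpow_pos_of_pos (hL i) β
  have hcross : q * (L i ^ β * c * (z i - u i)) = η * (g * (z i - u i)) := by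
    rw [hc]; field_simp
  have hsquare : q * (L i ^ β * c ^ 2) = η / τ * q * (g ^ 2 / L i) := by
    rw [hc]; field_simp
    linear_combination (-(η * g ^ 2)) * hqL
  linear_combination q * hmirror + (η / τ * q) * hdescent - hcross + hsquare / 2

lemma CoordSmooth.expected_step_le (hsmooth : CoordSmooth f L) (hf : Differentiable ℝ f)
    (hL : ∀ j, 0 < L j) {s η τ : ℝ} (hs : 0 ≤ s) (hη : 0 ≤ η) (hτ : 0 < τ) {p : Fin n → ℝ}
    (hp : ∀ i, 0 < p i) (hp_sum : ∑ i, p i = 1) (hpL : ∀ i, p i ^ 2 * L i ^ β = τ * η * L i)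
    {x z u : Fin n → ℝ} {Y W : Fin n → Fin n → ℝ}
    (hY : ∀ i, Y i = x - (1 / L i * coordGrad f x i) • basisVec i)
    (hW : ∀ i, (1 + s) • (W i - u) = (z - u) + s • (x - u)
      - (η / (p i * L i ^ β) * coordGrad f x i) • basisVec i) :
    η * ∑ i, coordGrad f x i * (z i - u i) + (1 + s) / 2 * ∑ i, p i * wnormSq L β (W i - u)
      ≤ η / τ * (f x - ∑ i, p i * f (Y i))
        + wnormSq L β (z - u) / 2 + s / 2 * wnormSq L β (x - u) := by
  have hsum := Finset.sum_le_sum fun i (_ : i ∈ Finset.univ) =>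
    hsmooth.coord_step_le hf hL hs hη hτ (hp i) (hpL i) (hW i)
  simp only [← hY, Finset.sum_add_distrib, ← Finset.mul_sum, ← Finset.sum_mul, mul_sub,
    Finset.sum_sub_distrib, hp_sum, one_mul] at hsum ⊢
  linarith

lemma StronglyConvexW.sub_add_le {σ : ℝ} (hsc : StronglyConvexW f L β σ) (x y : Fin n → ℝ) :
    f x - f y + σ / 2 * wnormSq L β (x - y) ≤ ∑ i, coordGrad f x i * (x i - y i) := by
  have h := hsc x y
  have hneg : ∑ i, coordGrad f x i * (y i - x i) = -∑ i, coordGrad f x i * (x i - y i) := by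
    rw [← Finset.sum_neg_distrib]; congr with i; ring
  rw [wnormSq_sub_comm, hneg] at h
  linarith

lemma StronglyConvexW.coupling_le {σ : ℝ} (hsc : StronglyConvexW f L β σ) (hL : ∀ j, 0 ≤ L j)
    (hσ : 0 ≤ σ) {τ : ℝ} (hτ0 : 0 < τ) (hτ1 : τ ≤ 1) {x y z u : Fin n → ℝ}
    (hx : x = τ • z + (1 - τ) • y) :
    (1 - τ) / τ * (f x - f y) + (f x - f u + σ / 2 * wnormSq L β (x - u))
      ≤ ∑ i, coordGrad f x i * (z i - u i) := by
  have hsplit : ∑ i, coordGrad f x i * (z i - u i)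
      = (1 - τ) / τ * ∑ i, coordGrad f x i * (x i - y i) + ∑ i, coordGrad f x i * (x i - u i) := by
    rw [Finset.mul_sum, ← Finset.sum_add_distrib]
    refine Finset.sum_congr rfl fun i _ => ?_
    have hxi : x i = τ * z i + (1 - τ) * y i := by simp [hx]
    field_simp
    linear_combination (-coordGrad f x i) * hxi
  have hy : f x - f y ≤ ∑ i, coordGrad f x i * (x i - y i) := by
    nlinarith [hsc.sub_add_le x y, wnormSq_nonneg L β hL (x - y)]
  have := mul_le_mul_of_nonneg_left hy (div_nonneg (sub_nonneg.mpr hτ1) hτ0.le)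
  linarith [hsc.sub_add_le x u]

end

lemma rpow_div_sq_mul_rpow {l : ℝ} (hl : 0 ≤ l) (β S : ℝ) :
    (l ^ ((1 - β) / 2) / S) ^ 2 * l ^ β = l / S ^ 2 := by
  rw [div_pow, ← rpow_natCast, ← rpow_mul hl, div_mul_eq_mul_div, ← rpow_add' hl (by norm_num)]
  norm_num

theorem stmt_5_general (n : ℕ) (f : (Fin n → ℝ) → ℝ) (L : Fin n → ℝ)
    (hf : Differentiable ℝ f) (hL : ∀ i, 0 < L i)
    (hsmooth : CoordSmooth f L)
    (β σβ : ℝ) (hσ : 0 < σβ)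
    (hsc : StronglyConvexW f L β σβ)
    (xstar : Fin n → ℝ)
    (α Sα : ℝ) (hα : α = (1 - β) / 2) (hS : Sα = ∑ i, L i ^ α)
    (p : Fin n → ℝ) (hp : ∀ i, p i = L i ^ α / Sα)
    (τ η : ℝ) (hτ0 : 0 < τ) (hτ1 : τ ≤ 1) (hη : η = 1 / (τ * Sα ^ 2))
    (yk zk xk1 : Fin n → ℝ) (hx : xk1 = τ • zk + (1 - τ) • yk)
    (Y Z : Fin n → Fin n → ℝ)
    (hY : ∀ i, Y i = xk1 - (1 / L i * coordGrad f xk1 i) • basisVec i)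
    (hZ : ∀ i, Z i = (1 / (1 + η * σβ)) •
      (zk + (η * σβ) • xk1 - (η / (p i * L i ^ β) * coordGrad f xk1 i) • basisVec i)) :
    0 ≤ (1 - τ) * η / τ * (f yk - f xstar)
        - η / τ * ∑ i, p i * (f (Y i) - f xstar)
        + (1 / 2) * wnormSq L β (zk - xstar)
        - (1 + η * σβ) / 2 * ∑ i, p i * wnormSq L β (Z i - xstar) := by
  -- for `n = 0` the `p i` cannot sum to `1`, but every term vanishes
  rcases isEmpty_or_nonempty (Fin n) with hn | hn
  · simp [wnormSq, Subsingleton.elim yk xstar]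
  have hSpos : 0 < Sα :=
    hS ▸ Finset.sum_pos (fun i _ => rpow_pos_of_pos (hL i) α) Finset.univ_nonempty
  have hp_pos : ∀ i, 0 < p i := fun i => hp i ▸ div_pos (rpow_pos_of_pos (hL i) α) hSpos
  have hp_sum : ∑ i, p i = 1 := by simp only [hp, ← Finset.sum_div, ← hS, div_self hSpos.ne']
  have hη_pos : 0 < η := hη ▸ by positivity
  have hpL : ∀ i, p i ^ 2 * L i ^ β = τ * η * L i := fun i => by
    rw [hp i, hα, rpow_div_sq_mul_rpow (hL i).le, hη]; field_simp
  have hs : 0 ≤ η * σβ := by positivity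
  have hW : ∀ i, (1 + η * σβ) • (Z i - xstar) = (zk - xstar) + (η * σβ) • (xk1 - xstar)
      - (η / (p i * L i ^ β) * coordGrad f xk1 i) • basisVec i := fun i => by
    rw [hZ i, smul_sub, smul_smul, mul_one_div_cancel (by positivity), one_smul]; module
  have hstep := hsmooth.expected_step_le hf hL hs hη_pos.le hτ0 hp_pos hp_sum hpL hY hW
  have hcoupling := hsc.coupling_le (fun i => (hL i).le) hσ.le hτ0 hτ1 (u := xstar) hx
  have hpY : ∑ i, p i * (f (Y i) - f xstar) = ∑ i, p i * f (Y i) - f xstar := by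
    simp only [mul_sub, Finset.sum_sub_distrib, ← Finset.sum_mul, hp_sum, one_mul]
  rw [hpY]
  linear_combination hstep + η * hcoupling + (η * (f xk1 - f xstar)) * mul_inv_cancel₀ hτ0.ne'

/-- Lemma 5.6: the per-iteration inequality of NU_ACDM against the minimizer `x*`. -/
theorem stmt_5 (n : ℕ) (f : (Fin n → ℝ) → ℝ) (L : Fin n → ℝ)
    (hf : Differentiable ℝ f) (hconv : ConvexOn ℝ Set.univ f) (hL : ∀ i, 0 < L i)
    (hsmooth : CoordSmooth f L)
    (β σβ : ℝ) (hβ : β ∈ Set.Icc (0 : ℝ) 1) (hσ : 0 < σβ)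
    (hsc : StronglyConvexW f L β σβ)
    (xstar : Fin n → ℝ) (hxstar : ∀ v, f xstar ≤ f v)
    (α Sα : ℝ) (hα : α = (1 - β) / 2) (hS : Sα = ∑ i, L i ^ α)
    (p : Fin n → ℝ) (hp : ∀ i, p i = L i ^ α / Sα)
    (τ η : ℝ) (hτ0 : 0 < τ) (hτ1 : τ ≤ 1) (hη : η = 1 / (τ * Sα ^ 2))
    (yk zk xk1 : Fin n → ℝ) (hx : xk1 = τ • zk + (1 - τ) • yk)
    (Y Z : Fin n → Fin n → ℝ)
    (hY : ∀ i, Y i = xk1 - (1 / L i * coordGrad f xk1 i) • basisVec i)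
    (hZ : ∀ i, Z i = (1 / (1 + η * σβ)) •
      (zk + (η * σβ) • xk1 - (η / (p i * L i ^ β) * coordGrad f xk1 i) • basisVec i)) :
    0 ≤ (1 - τ) * η / τ * (f yk - f xstar)
        - η / τ * ∑ i, p i * (f (Y i) - f xstar)
        + (1 / 2) * wnormSq L β (zk - xstar)
        - (1 + η * σβ) / 2 * ∑ i, p i * wnormSq L β (Z i - xstar) :=
  stmt_5_general n f L hf hL hsmooth β σβ hσ hsc xstar α Sα hα hS p hp τ η hτ0 hτ1 hη yk zk xk1 hx Y
    Z hY hZ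
end

section
/- Let f : ℝ^n → ℝ be differentiable, coordinate-wise smooth with parameters (L_1,…,L_n) (each L_i > 0), and σ_β-strongly convex with respect to ‖·‖_{L_β} for some β ∈ [0,1] and σ_β > 0. Then for every coordinate i, L_i ≥ σ_β·L_i^β, i.e. L_i^{1−β} ≥ σ_β; consequently, setting S_α := Σ_{i=1}^n L_i^α with α := (1−β)/2, one has S_α² ≥ Σ_{i=1}^n L_i^{2α} ≥ n·σ_β. -/
/-- If f is coordinate-wise smooth with parameters (L_i) and σ_β-strongly convex with
respect to ‖·‖_{L_β}, then `L_i ≥ σ_β L_i^β` (i.e. `L_i^{1−β} ≥ σ_β`), and hence with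
`α = (1−β)/2`: `S_α² ≥ Σ_i L_i^{2α} ≥ n σ_β`. -/
theorem stmt_13 (n : ℕ) (f : (Fin n → ℝ) → ℝ) (L : Fin n → ℝ)
    (hf : Differentiable ℝ f) (hL : ∀ i, 0 < L i)
    (hsmooth : CoordSmooth f L)
    (β σβ : ℝ) (hβ : β ∈ Set.Icc (0 : ℝ) 1) (hσ : 0 < σβ)
    (hsc : StronglyConvexW f L β σβ)
    (α Sα : ℝ) (hα : α = (1 - β) / 2) (hS : Sα = ∑ i, L i ^ α) :
    (∀ i, σβ * L i ^ β ≤ L i) ∧ (∀ i, σβ ≤ L i ^ (1 - β)) ∧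
      (n : ℝ) * σβ ≤ (∑ i, L i ^ (2 * α)) ∧ (∑ i, L i ^ (2 * α)) ≤ Sα ^ 2 := by

  have key : ∀ i, σβ * L i ^ β ≤ L i := by
    intro i
    have h1 := hsc 0 (basisVec i)
    have h2 := hsc (basisVec i) 0
    have hs := hsmooth 0 1 i
    have hy : (0 : Fin n → ℝ) + (1:ℝ) • basisVec i = basisVec i := by simp
    rw [hy] at hs
    have hw1 : wnormSq L β (basisVec i - 0) = L i ^ β := by
      simp [wnormSq, basisVec, Pi.single_apply, ite_pow, mul_ite]
    have hw2 : wnormSq L β ((0 : Fin n → ℝ) - basisVec i) = L i ^ β := by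
      simp [wnormSq, basisVec, Pi.single_apply, ite_pow, mul_ite]
    have hg1 : (∑ j, coordGrad f 0 j * (basisVec i j - (0 : Fin n → ℝ) j))
        = coordGrad f 0 i := by
      simp [basisVec, Pi.single_apply, mul_ite]
    have hg2 : (∑ j, coordGrad f (basisVec i) j * ((0 : Fin n → ℝ) j - basisVec i j))
        = -coordGrad f (basisVec i) i := by
      simp [basisVec, Pi.single_apply, mul_ite]
    rw [hw1, hg1] at h1
    rw [hw2, hg2] at h2
    have habs : coordGrad f (basisVec i) i - coordGrad f 0 i ≤ L i := by
      have := le_abs_self (coordGrad f (basisVec i) i - coordGrad f 0 i)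
      simp at hs
      linarith
    linarith
  have key2 : ∀ i, σβ ≤ L i ^ (1 - β) := by
    intro i
    have hpos : (0:ℝ) < L i ^ β := Real.rpow_pos_of_pos (hL i) β
    have : L i ^ (1 - β) = L i / L i ^ β := by
      rw [Real.rpow_sub (hL i), Real.rpow_one]
    rw [this, le_div_iff₀ hpos]
    exact key i
  have h2a : 2 * α = 1 - β := by rw [hα]; ring
  refine ⟨key, key2, ?_, ?_⟩
  · rw [h2a]
    calc (n : ℝ) * σβ = ∑ _i : Fin n, σβ := by simp [mul_comm]
    _ ≤ ∑ i, L i ^ (1 - β) := Finset.sum_le_sum fun i _ => key2 i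
  · have heq : ∀ i, L i ^ (2 * α) = (L i ^ α) ^ 2 := by
      intro i
      rw [mul_comm, Real.rpow_mul (le_of_lt (hL i))]
      norm_num
    calc (∑ i, L i ^ (2 * α)) = ∑ i, (L i ^ α) ^ 2 := by
          exact Finset.sum_congr rfl fun i _ => heq i
    _ ≤ (∑ i, L i ^ α) ^ 2 :=
        Finset.sum_sq_le_sq_sum_of_nonneg fun i _ =>
          le_of_lt (Real.rpow_pos_of_pos (hL i) α)
    _ = Sα ^ 2 := by rw [hS]
end
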